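/- exp_2(S¹) is homeomorphic to the Möbius band: the space of nonempty subsets of the circle of size at most 2, topologized as a quotient of the torus S¹ × S¹ by coordinate swap, is homeomorphic to the Möbius strip (compact, with boundary the diagonal circle). -/
import Mathlib


open Set Topology

/-- The setoid on `X^k` identifying tuples with the same set of coordinates. -/
def expSetoid (X : Type*) (k : ℕ) : Setoid (Fin k → X) :=
  ⟨fun f g => Set.range f = Set.range g, ⟨fun _ => rfl, Eq.symm, Eq.trans⟩⟩

/-- The `k`-th finite subset space of `X`: the quotient of `X^k` by the map
`(x_1,…,x_k) ↦ {x_1,…,x_k}`.  When `X` is a topological space it carries the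
quotient topology from the product `X^k`. -/
def Exp (X : Type*) (k : ℕ) : Type _ :=
  Quotient (expSetoid X k)

instance (X : Type*) [TopologicalSpace X] (k : ℕ) : TopologicalSpace (Exp X k) :=
  instTopologicalSpaceQuotient

/-- The canonical surjection `X^k → exp_k X`. -/
def Exp.mk (X : Type*) (k : ℕ) (f : Fin k → X) : Exp X k :=
  Quotient.mk (expSetoid X k) f

/-- The underlying subset of `X` corresponding to a point of `exp_k X`. -/
def Exp.toSet {X : Type*} {k : ℕ} : Exp X k → Set X :=
  Quotient.lift Set.range fun _ _ h => h

open unitInterval in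
/-- The identifications defining the Möbius band: glue `{0} × I` to `{1} × I`
via `(0, y) ∼ (1, 1 - y)`. -/
def moebiusRel (p q : I × I) : Prop :=
  p.1 = 0 ∧ q.1 = 1 ∧ q.2 = unitInterval.symm p.2

/-- The Möbius band, as the quotient of the square `I × I` by the identification
`(0, y) ∼ (1, 1 - y)`, with the quotient topology. -/
def Moebius : Type :=
  Quot moebiusRel

instance : TopologicalSpace Moebius :=
  TopologicalSpace.coinduced (Quot.mk moebiusRel) inferInstance

open unitInterval Real

lemma range_fin2 {X : Type*} (f : Fin 2 → X) : Set.range f = {f 0, f 1} := by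
  ext x
  simp [Fin.exists_fin_two, eq_comm]

lemma exp2_mk_eq {X : Type*} (u v : Fin 2 → X) :
    Exp.mk X 2 u = Exp.mk X 2 v ↔ (u 0 = v 0 ∧ u 1 = v 1) ∨ (u 0 = v 1 ∧ u 1 = v 0) := by
  constructor
  · intro h
    have h' : Set.range u = Set.range v := Quotient.exact h
    rwa [range_fin2, range_fin2, Set.pair_eq_pair_iff] at h'
  · intro h
    apply Quotient.sound
    show Set.range u = Set.range v
    rw [range_fin2, range_fin2, Set.pair_eq_pair_iff]
    exact h

lemma mk_swap {X : Type*} (a b : X) : Exp.mk X 2 ![a, b] = Exp.mk X 2 ![b, a] :=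
  (exp2_mk_eq _ _).2 (Or.inr ⟨by simp, by simp⟩)

lemma mk_pair {X : Type*} (v : Fin 2 → X) : Exp.mk X 2 v = Exp.mk X 2 ![v 0, v 1] := by
  congr 1
  funext i
  fin_cases i <;> simp

noncomputable def symPair (v : Fin 2 → Circle) : ℂ × ℂ :=
  ((v 0 : ℂ) * (v 1 : ℂ), (v 0 : ℂ) + (v 1 : ℂ))

lemma symPair_sound : ∀ (u v : Fin 2 → Circle),
    Set.range u = Set.range v → symPair u = symPair v := by
  intro u v h
  rw [range_fin2, range_fin2, Set.pair_eq_pair_iff] at h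
  have h' := h
  rcases h' with ⟨h0, h1⟩ | ⟨h0, h1⟩ <;>
    simp [symPair, h0, h1, mul_comm, add_comm]

noncomputable def symLift : Exp Circle 2 → ℂ × ℂ :=
  Quotient.lift symPair symPair_sound

lemma complex_pair_eq {a b c d : ℂ} (h1 : a * b = c * d) (h2 : a + b = c + d) :
    (a = c ∧ b = d) ∨ (a = d ∧ b = c) := by
  have key : (c - a) * (c - b) = 0 := by
    have : (c - a) * (c - b) = c * c - (a + b) * c + a * b := by ring
    rw [this, h2, h1]; ring
  rcases mul_eq_zero.mp key with h | h
  · have hca : c = a := sub_eq_zero.mp h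
    left
    exact ⟨hca.symm, by linear_combination h2 + hca⟩
  · have hcb : c = b := sub_eq_zero.mp h
    right
    exact ⟨by linear_combination h2 + hcb, hcb.symm⟩

instance : T2Space (Exp Circle 2) := by
  apply T2Space.of_injective_continuous (f := symLift)
  · intro a b
    refine Quotient.inductionOn₂ a b ?_
    intro u v h
    have h1 : (u 0 : ℂ) * u 1 = (v 0 : ℂ) * v 1 := congrArg Prod.fst h
    have h2 : (u 0 : ℂ) + u 1 = (v 0 : ℂ) + v 1 := congrArg Prod.snd h
    have := complex_pair_eq h1 h2
    apply Quotient.sound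
    show Set.range u = Set.range v
    rw [range_fin2, range_fin2, Set.pair_eq_pair_iff]
    rcases this with ⟨e0, e1⟩ | ⟨e0, e1⟩
    · exact Or.inl ⟨Circle.ext e0, Circle.ext e1⟩
    · exact Or.inr ⟨Circle.ext e0, Circle.ext e1⟩
  · exact Continuous.quotient_lift (by unfold symPair; fun_prop) symPair_sound

instance : CompactSpace Moebius := by
  constructor
  have hmk : Continuous (Quot.mk moebiusRel : I × I → Moebius) := continuous_coinduced_rng
  have : (Set.univ : Set Moebius) = Quot.mk moebiusRel '' Set.univ := by
    rw [Set.image_univ]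
    exact (Set.range_quot_mk _).symm
  rw [this]
  exact isCompact_univ.image hmk

noncomputable def g0 (p : I × I) : Exp Circle 2 :=
  Exp.mk Circle 2 ![Circle.exp (π * ((p.1 : ℝ) + (p.2 : ℝ))),
    Circle.exp (π * ((p.1 : ℝ) - (p.2 : ℝ)))]

lemma g0_cont : Continuous g0 := by
  have hmk : Continuous (Exp.mk Circle 2) := continuous_coinduced_rng
  apply hmk.comp
  apply continuous_pi
  intro i
  fin_cases i <;>
    · simp only [Matrix.cons_val_zero, Matrix.cons_val_one, Matrix.head_cons]
      exact Circle.exp.continuous.comp (by fun_prop)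

lemma moeb_glue (p q : I × I)
    (h : ((p.1 : ℝ) = q.1 ∧ (p.2 : ℝ) = q.2) ∨
         ((p.1 : ℝ) = 0 ∧ (q.1 : ℝ) = 1 ∧ (q.2 : ℝ) = 1 - (p.2 : ℝ)) ∨
         ((q.1 : ℝ) = 0 ∧ (p.1 : ℝ) = 1 ∧ (p.2 : ℝ) = 1 - (q.2 : ℝ))) :
    Quot.mk moebiusRel p = Quot.mk moebiusRel q := by
  rcases h with ⟨h1, h2⟩ | ⟨h1, h2, h3⟩ | ⟨h1, h2, h3⟩
  · congr 1
    exact Prod.ext (Subtype.ext h1) (Subtype.ext h2)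
  · exact Quot.sound ⟨Subtype.ext h1, Subtype.ext h2,
      Subtype.ext (by rw [coe_symm_eq]; exact h3)⟩
  · exact (Quot.sound ⟨Subtype.ext h1, Subtype.ext h2,
      Subtype.ext (by rw [coe_symm_eq]; exact h3)⟩).symm

lemma g0_sound : ∀ a b : I × I, moebiusRel a b → g0 a = g0 b := by
  rintro a b ⟨h1, h2, h3⟩
  have ha1 : (a.1 : ℝ) = 0 := by rw [h1]; simp
  have hb1 : (b.1 : ℝ) = 1 := by rw [h2]; simp
  have hb2 : (b.2 : ℝ) = 1 - (a.2 : ℝ) := by rw [h3, coe_symm_eq]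
  unfold g0
  rw [exp2_mk_eq]
  simp only [Matrix.cons_val_zero, Matrix.cons_val_one, Matrix.head_cons]
  right
  constructor
  · rw [ha1, hb1, hb2]
    congr 1
    ring
  · rw [ha1, hb1, hb2]
    have h4 : π * (1 + (1 - (a.2:ℝ))) = π * (0 - (a.2:ℝ)) + 2 * π := by ring
    rw [h4, Circle.exp_add_two_pi]

lemma g0_surj_aux (θ φ : ℝ) (hθ₂ : θ ≤ π) (hφ₁ : -π < φ) (hle : φ ≤ θ) :
    ∃ p : I × I, g0 p = Exp.mk Circle 2 ![Circle.exp θ, Circle.exp φ] := by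
  have hπ := Real.pi_pos
  have h2π : (0:ℝ) < 2 * π := by linarith
  set x := (θ + φ) / (2 * π) with hxdef
  set y := (θ - φ) / (2 * π) with hydef
  have hy0 : 0 ≤ y := div_nonneg (by linarith) (le_of_lt h2π)
  have hy1 : y ≤ 1 := by rw [hydef, div_le_one h2π]; linarith
  have hx1 : x ≤ 1 := by rw [hxdef, div_le_one h2π]; linarith
  have hxm : -1 < x := by rw [hxdef, lt_div_iff₀ h2π]; linarith
  have e1 : π * (x + y) = θ := by
    rw [hxdef, hydef]
    field_simp
    ring
  have e2 : π * (x - y) = φ := by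
    rw [hxdef, hydef]
    field_simp
    ring
  by_cases hx0 : 0 ≤ x
  · refine ⟨(⟨x, hx0, hx1⟩, ⟨y, hy0, hy1⟩), ?_⟩
    show Exp.mk Circle 2 ![Circle.exp (π * (x + y)), Circle.exp (π * (x - y))] = _
    rw [e1, e2]
  · push_neg at hx0
    refine ⟨(⟨x + 1, by linarith, by linarith⟩, ⟨1 - y, by linarith, by linarith⟩), ?_⟩
    show Exp.mk Circle 2
      ![Circle.exp (π * ((x + 1) + (1 - y))), Circle.exp (π * ((x + 1) - (1 - y)))] = _
    have e3 : π * ((x + 1) + (1 - y)) = π * (x - y) + 2 * π := by ring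
    have e4 : π * ((x + 1) - (1 - y)) = π * (x + y) := by ring
    rw [e3, e4, Circle.exp_add_two_pi, e1, e2]
    exact mk_swap _ _

lemma g0_surj : ∀ z : Exp Circle 2, ∃ p : I × I, g0 p = z := by
  intro z
  induction z using Quotient.inductionOn with
  | h v =>
    rcases le_total (Complex.arg (v 1 : ℂ)) (Complex.arg (v 0 : ℂ)) with hle | hle
    · obtain ⟨p, hp⟩ := g0_surj_aux (Complex.arg (v 0 : ℂ)) (Complex.arg (v 1 : ℂ))
        (Complex.arg_le_pi _) (Complex.neg_pi_lt_arg _) hle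
      refine ⟨p, ?_⟩
      rw [hp, Circle.exp_arg, Circle.exp_arg]
      exact (mk_pair v).symm
    · obtain ⟨p, hp⟩ := g0_surj_aux (Complex.arg (v 1 : ℂ)) (Complex.arg (v 0 : ℂ))
        (Complex.arg_le_pi _) (Complex.neg_pi_lt_arg _) hle
      refine ⟨p, ?_⟩
      rw [hp, Circle.exp_arg, Circle.exp_arg, mk_swap]
      exact (mk_pair v).symm

lemma g0_inj (p q : I × I) (h : g0 p = g0 q) : Quot.mk moebiusRel p = Quot.mk moebiusRel q := by
  have hx0 : (0:ℝ) ≤ p.1 := p.1.2.1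
  have hx1 : (p.1:ℝ) ≤ 1 := p.1.2.2
  have hy0 : (0:ℝ) ≤ p.2 := p.2.2.1
  have hy1 : (p.2:ℝ) ≤ 1 := p.2.2.2
  have hx0' : (0:ℝ) ≤ q.1 := q.1.2.1
  have hx1' : (q.1:ℝ) ≤ 1 := q.1.2.2
  have hy0' : (0:ℝ) ≤ q.2 := q.2.2.1
  have hy1' : (q.2:ℝ) ≤ 1 := q.2.2.2
  unfold g0 at h
  rw [exp2_mk_eq] at h
  simp only [Matrix.cons_val_zero, Matrix.cons_val_one, Matrix.head_cons] at h
  rcases h with ⟨h1, h2⟩ | ⟨h1, h2⟩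
  · rw [Circle.exp_eq_exp] at h1 h2
    obtain ⟨m, hm⟩ := h1
    obtain ⟨n, hn⟩ := h2
    have e1 : (p.1:ℝ) + p.2 = q.1 + q.2 + 2 * m :=
      mul_left_cancel₀ Real.pi_ne_zero (by rw [hm]; ring)
    have e2 : (p.1:ℝ) - p.2 = q.1 - q.2 + 2 * n :=
      mul_left_cancel₀ Real.pi_ne_zero (by rw [hn]; ring)
    have hm1 : -1 ≤ m := by
      have hr : (-2:ℝ) ≤ 2 * m := by linarith
      have hz : (-2:ℤ) ≤ 2 * m := by exact_mod_cast hr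
      omega
    have hm2 : m ≤ 1 := by
      have hr : (2:ℝ) * m ≤ 2 := by linarith
      have hz : (2:ℤ) * m ≤ 2 := by exact_mod_cast hr
      omega
    have hn1 : -1 ≤ n := by
      have hr : (-2:ℝ) ≤ 2 * n := by linarith
      have hz : (-2:ℤ) ≤ 2 * n := by exact_mod_cast hr
      omega
    have hn2 : n ≤ 1 := by
      have hr : (2:ℝ) * n ≤ 2 := by linarith
      have hz : (2:ℤ) * n ≤ 2 := by exact_mod_cast hr
      omega
    interval_cases m <;> interval_cases n <;>
      (push_cast at e1 e2;
       first
       | (exfalso; linarith)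
       | exact moeb_glue _ _ (Or.inl ⟨by linarith, by linarith⟩)
       | exact moeb_glue _ _ (Or.inr (Or.inl ⟨by linarith, by linarith, by linarith⟩))
       | exact moeb_glue _ _ (Or.inr (Or.inr ⟨by linarith, by linarith, by linarith⟩)))
  · rw [Circle.exp_eq_exp] at h1 h2
    obtain ⟨m, hm⟩ := h1
    obtain ⟨n, hn⟩ := h2
    have e1 : (p.1:ℝ) + p.2 = q.1 - q.2 + 2 * m :=
      mul_left_cancel₀ Real.pi_ne_zero (by rw [hm]; ring)
    have e2 : (p.1:ℝ) - p.2 = q.1 + q.2 + 2 * n :=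
      mul_left_cancel₀ Real.pi_ne_zero (by rw [hn]; ring)
    have hm1 : 0 ≤ m := by
      have hr : (-1:ℝ) ≤ 2 * m := by linarith
      have hz : (-1:ℤ) ≤ 2 * m := by exact_mod_cast hr
      omega
    have hm2 : m ≤ 1 := by
      have hr : (2:ℝ) * m ≤ 3 := by linarith
      have hz : (2:ℤ) * m ≤ 3 := by exact_mod_cast hr
      omega
    have hn1 : -1 ≤ n := by
      have hr : (-3:ℝ) ≤ 2 * n := by linarith
      have hz : (-3:ℤ) ≤ 2 * n := by exact_mod_cast hr
      omega
    have hn2 : n ≤ 0 := by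
      have hr : (2:ℝ) * n ≤ 1 := by linarith
      have hz : (2:ℤ) * n ≤ 1 := by exact_mod_cast hr
      omega
    interval_cases m <;> interval_cases n <;>
      (push_cast at e1 e2;
       first
       | (exfalso; linarith)
       | exact moeb_glue _ _ (Or.inl ⟨by linarith, by linarith⟩)
       | exact moeb_glue _ _ (Or.inr (Or.inl ⟨by linarith, by linarith, by linarith⟩))
       | exact moeb_glue _ _ (Or.inr (Or.inr ⟨by linarith, by linarith, by linarith⟩)))

/-- `exp_2 S¹`, the space of non-empty subsets of the circle of size at most two
(the quotient of the torus by the coordinate swap), is homeomorphic to the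
Möbius band. -/
theorem stmt_17 : Nonempty (Exp Circle 2 ≃ₜ Moebius) := by
  have hg_bij : Function.Bijective (Quot.lift g0 g0_sound) := by
    constructor
    · intro a b
      induction a using Quot.ind
      induction b using Quot.ind
      exact g0_inj _ _
    · intro z
      obtain ⟨p, hp⟩ := g0_surj z
      exact ⟨Quot.mk _ p, hp⟩
  have hg_cont : Continuous (Quot.lift g0 g0_sound : Moebius → Exp Circle 2) :=
    continuous_coinduced_dom.mpr g0_cont
  exact ⟨(Continuous.homeoOfEquivCompactToT2 (f := Equiv.ofBijective _ hg_bij) hg_cont).symm⟩
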